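/- Let n_v ≥ 1 and n_c ≥ 1 be integers and let the alphabet be the disjoint union A = Fin n_v ⊕ Fin n_c (vowels and consonants). Call a word w : Fin k → A alternating if for every i with i + 1 < k, the letters w(i) and w(i+1) lie in different summands of A. If k ≥ 1 is even, or if k is odd and n_v = n_c, then there exists a universal cycle for the set of alternating k-letter words over A. -/

import Mathlib

/-!
Read a word `w` of length `n + 1` as an edge of a directed multigraph on words of length `n`,
going from its prefix `Fin.init w` to its suffix `Fin.tail w`. A cyclic ordering of a set `S`
of words in which each word's suffix is the next word's prefix is then an Eulerian circuit of
the graph with edge set `S`, and reading off the first letters gives a U-cycle. An Eulerian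
circuit exists when every vertex has as many outgoing as incoming edges and any edge can reach
any other: a longest trail must then be closed, and a closed trail that misses an edge can be
rotated and extended.

For alternating words, any two lie on one infinite alternating sequence, which gives the
connectivity. An alternating `v` of length `n` has one outgoing edge for each letter of the
class opposite to its last letter and one incoming edge for each letter of the class opposite
to its first letter. For odd `n` (that is, even `k`) these are the same class; for even `n`
they are opposite classes, which have the same size when `n_v = n_c`.
-/

open Classical in
noncomputable def wordsOf {A : Type*} [Fintype A] {k : ℕ} (P : (Fin k → A) → Prop) :
    Finset (Fin k → A) :=
  Finset.univ.filter P

def HasUCycle {A : Type*} {k : ℕ} (S : Finset (Fin k → A)) : Prop :=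
  ∃ c : ZMod S.card → A,
    Set.BijOn (fun i : ZMod S.card => fun j : Fin k => c (i + (j.val : ZMod S.card)))
      Set.univ ↑S

open Finset

theorem Relation.ReflTransGen.exists_rel_of_mem_of_notMem {α : Type*} {r : α → α → Prop}
    {s : Set α} {a b : α} (h : Relation.ReflTransGen r a b) (ha : a ∈ s) (hb : b ∉ s) :
    ∃ x ∈ s, ∃ y ∉ s, r x y := by
  induction h with
  | refl => exact absurd ha hb
  | @tail c d _ hcd ih =>
    by_cases hc : c ∈ s
    · exact ⟨c, hc, d, hb, hcd⟩
    · exact ih hc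

theorem Cycle.Chain.isChain {α : Type*} {r : α → α → Prop} {l : List α}
    (h : Cycle.Chain r (l : Cycle α)) : l.IsChain r := by
  cases l with
  | nil => exact List.isChain_nil
  | cons a t =>
    rw [Cycle.chain_coe_cons, ← List.cons_append] at h
    exact (List.isChain_append.1 h).1

theorem Cycle.Chain.rel_getElem_add_one_mod {α : Type*} {r : α → α → Prop} {l : List α}
    (h : Cycle.Chain r (l : Cycle α)) (i : ℕ) (hi : i < l.length) :
    r l[i] (l[(i + 1) % l.length]'(Nat.mod_lt _ (Nat.zero_lt_of_lt hi))) := by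
  obtain ⟨a, t, rfl⟩ :=
    List.exists_cons_of_ne_nil (List.ne_nil_of_length_pos (Nat.zero_lt_of_lt hi))
  rw [Cycle.chain_coe_cons, ← List.cons_append] at h
  have hi' : i + 1 < (a :: t ++ [a]).length := by simpa using hi
  convert h.getElem i hi' using 1
  · exact (List.getElem_append_left hi).symm
  · rcases Nat.lt_or_ge (i + 1) (a :: t).length with hlt | hge
    · simp only [Nat.mod_eq_of_lt hlt, List.getElem_append_left hlt]
    · have : i + 1 = (a :: t).length := by omega
      simp [this]

theorem exists_longest_nodup_isChain {α : Type*} [Finite α] (r : α → α → Prop) (a : α) :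
    ∃ l : List α, l ≠ [] ∧ l.Nodup ∧ l.IsChain r ∧
      ∀ l' : List α, l'.Nodup → l'.IsChain r → l'.length ≤ l.length := by
  have : Fintype α := Fintype.ofFinite α
  have hfin : {l : List α | l.Nodup ∧ l.IsChain r}.Finite :=
    (@Set.toFinite _ {l : List α | l.Nodup} (Finite.of_fintype {l : List α // l.Nodup})).subset
      fun l hl => hl.1
  obtain ⟨l, ⟨hnd, hch⟩, hmax⟩ :=
    Set.exists_max_image _ List.length hfin ⟨[a], List.nodup_singleton a, List.isChain_singleton a⟩
  refine ⟨l, ?_, hnd, hch, fun l' hnd' hch' => hmax l' ⟨hnd', hch'⟩⟩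
  have := hmax [a] ⟨List.nodup_singleton a, List.isChain_singleton a⟩
  rintro rfl
  simp at this

theorem List.Nodup.count_map_eq_card_filter {α β : Type*} [DecidableEq α] [DecidableEq β]
    {l : List α} (hl : l.Nodup) (f : α → β) (b : β) :
    (l.map f).count b = #{a ∈ l.toFinset | f a = b} := by
  rw [List.count_eq_countP, List.countP_map, List.countP_eq_length_filter,
    ← List.toFinset_card_of_nodup (hl.filter _), List.toFinset_filter]
  simp

theorem Finset.card_filter_univ_coe {α : Type*} (S : Finset α) (p : α → Prop)
    [DecidablePred p] : #{x : S | p x} = #{x ∈ S | p x} :=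
  card_bij (fun x _ => x.1) (by simp) (by simp) (by simp +contextual)

theorem forall_mem_of_longest_of_cycle {α : Type*} {r : α → α → Prop}
    (hconn : ∀ a b, Relation.ReflTransGen r a b) {T : List α} (hne : T ≠ []) (hnd : T.Nodup)
    (hcyc : Cycle.Chain r (T : Cycle α))
    (hmax : ∀ T' : List α, T'.Nodup → T'.IsChain r → T'.length ≤ T.length) (a : α) : a ∈ T := by
  by_contra ha
  obtain ⟨x, hx, y, hy, hxy⟩ :=
    (hconn (T.head hne) a).exists_rel_of_mem_of_notMem (s := {b | b ∈ T}) (T.head_mem hne) ha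
  obtain ⟨A, B, rfl⟩ := List.append_of_mem hx
  have hrot : (A ++ x :: B) ~r (B ++ A ++ [x]) := by
    simpa using List.isRotated_append (l := A ++ [x]) (l' := B)
  have hch : (B ++ A ++ [x]).IsChain r :=
    Cycle.Chain.isChain (by rwa [← Cycle.coe_eq_coe.2 hrot])
  have hlonger := hmax (B ++ A ++ [x] ++ [y])
    ((hrot.perm.nodup_iff.1 hnd).append (List.nodup_singleton y)
      (by simpa [hrot.perm.mem_iff] using hy))
    (hch.append (List.isChain_singleton y) (by simpa using hxy))
  simp only [List.append_assoc, List.cons_append, List.nil_append, List.length_append,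
    List.length_cons, List.length_nil] at hlonger
  omega

section Eulerian

variable {E V : Type*} {src tgt : E → V}

variable (src tgt) in
def Consecutive (a b : E) : Prop := tgt a = src b

theorem cons_map_tgt_eq_map_src_append {l : List E} (hl : l.IsChain (Consecutive src tgt))
    (hne : l ≠ []) : src (l.head hne) :: l.map tgt = l.map src ++ [tgt (l.getLast hne)] := by
  match l, hl with
  | [a], _ => rfl
  | a :: b :: t, hl =>
    obtain ⟨hab, hl⟩ := List.isChain_cons_cons.1 hl
    have ih := cons_map_tgt_eq_map_src_append hl (List.cons_ne_nil b t)
    simp only [List.head_cons, List.map_cons, List.getLast_cons_cons] at ih ⊢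
    rw [hab, ih]
    rfl

/-- A trail ending at a vertex `v` other than its starting vertex has left `v` once less often
than it entered it, so by balance some unused edge leaves `v`. -/
theorem consecutive_getLast_head_of_longest [Fintype E] [DecidableEq E] [DecidableEq V]
    (hbal : ∀ v, #{e | src e = v} = #{e | tgt e = v})
    {T : List E} (hne : T ≠ []) (hnd : T.Nodup) (hch : T.IsChain (Consecutive src tgt))
    (hmax : ∀ T' : List E, T'.Nodup → T'.IsChain (Consecutive src tgt) → T'.length ≤ T.length) :
    Consecutive src tgt (T.getLast hne) (T.head hne) := by
  by_contra hopen
  have hmap := cons_map_tgt_eq_map_src_append hch hne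
  unfold Consecutive at hopen
  generalize hv : tgt (T.getLast hne) = v at hopen hmap
  obtain ⟨e, heT, he⟩ : ∃ e ∉ T, src e = v := by
    by_contra! hall
    have hcount := congrArg (List.count v) hmap
    rw [List.count_cons_of_ne (Ne.symm hopen), List.count_append, List.count_singleton_self,
      hnd.count_map_eq_card_filter, hnd.count_map_eq_card_filter] at hcount
    have htgt : #{e ∈ T.toFinset | tgt e = v} ≤ #{e | tgt e = v} :=
      card_le_card (filter_subset_filter _ (subset_univ _))
    have hsrc : #{e ∈ T.toFinset | src e = v} = #{e | src e = v} := by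
      congr 1
      ext e
      simp only [mem_filter, mem_univ, true_and, List.mem_toFinset, and_iff_right_iff_imp]
      exact fun h => by_contra fun heT => hall e heT h
    have hbalv := hbal v
    omega
  have hlonger := hmax (T ++ [e]) (hnd.append (List.nodup_singleton e) (by simpa using heT))
    (hch.append (List.isChain_singleton e)
      (by simp [List.getLast?_eq_some_getLast hne, Consecutive, he, hv]))
  simp at hlonger

theorem exists_eulerian_circuit [Fintype E] [Nonempty E] [DecidableEq V]
    (hbal : ∀ v, #{e | src e = v} = #{e | tgt e = v})
    (hconn : ∀ a b, Relation.ReflTransGen (Consecutive src tgt) a b) :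
    ∃ l : List E, l.Nodup ∧ (∀ e, e ∈ l) ∧ Cycle.Chain (Consecutive src tgt) (l : Cycle E) := by
  classical
  obtain ⟨T, hne, hnd, hch, hmax⟩ :=
    exists_longest_nodup_isChain (Consecutive src tgt) (Classical.arbitrary E)
  have hcyc : Cycle.Chain (Consecutive src tgt) (T : Cycle E) := by
    refine (Cycle.chain_ne_nil _ hne).2 ?_
    obtain ⟨a, t, rfl⟩ := List.exists_cons_of_ne_nil hne
    exact List.isChain_cons_cons.2
      ⟨consecutive_getLast_head_of_longest hbal hne hnd hch hmax, hch⟩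
  exact ⟨T, hnd, forall_mem_of_longest_of_cycle hconn hne hnd hcyc hmax, hcyc⟩

end Eulerian

theorem hasUCycle_of_cycle_chain {A : Type*} {k : ℕ} (S : Finset (Fin (k + 1) → A))
    (l : List (Fin (k + 1) → A)) (hne : l ≠ []) (hnd : l.Nodup) (hmem : ∀ w, w ∈ l ↔ w ∈ S)
    (hcyc : Cycle.Chain (Consecutive Fin.init Fin.tail) (l : Cycle (Fin (k + 1) → A))) :
    HasUCycle S := by
  classical
  have hcard : S.card = l.length := by
    rw [← List.toFinset_card_of_nodup hnd]
    congr 1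
    ext w
    simp [hmem]
  rw [HasUCycle, hcard]
  set m := l.length
  have : NeZero m := ⟨by simpa [m] using hne⟩
  let g : ZMod m → Fin (k + 1) → A := fun i => l[i.val]'(ZMod.val_lt i)
  have hg : ∀ i, Fin.tail (g i) = Fin.init (g (i + 1)) := by
    intro i
    have hval : (i + 1).val = (i.val + 1) % m := by
      rw [← ZMod.val_natCast, Nat.cast_add, ZMod.natCast_zmod_val, Nat.cast_one]
    simp only [g, hval]
    exact hcyc.rel_getElem_add_one_mod i.val (ZMod.val_lt i)
  have hwindow : ∀ (j : ℕ) (hj : j < k + 1) (i : ZMod m), g i ⟨j, hj⟩ = g (i + j) 0 := by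
    intro j
    induction j with
    | zero => simp
    | succ j ih =>
      intro hj i
      calc g i ⟨j + 1, hj⟩ = Fin.tail (g i) ⟨j, by omega⟩ := rfl
        _ = g (i + 1) ⟨j, by omega⟩ := congrFun (hg i) _
        _ = g (i + (j + 1 : ℕ)) 0 := by rw [ih (by omega)]; push_cast; ring_nf
  refine ⟨fun i => g i 0, ?_⟩
  have hfun : (fun i : ZMod m => fun j : Fin (k + 1) => g (i + (j.val : ZMod m)) 0) = g := by
    funext i j
    exact (hwindow j j.isLt i).symm
  rw [hfun]
  refine ⟨fun i _ => (hmem _).1 (List.getElem_mem _), fun i _ i' _ h => ?_, fun w hw => ?_⟩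
  · exact ZMod.val_injective m (hnd.getElem_inj_iff.1 h)
  · obtain ⟨n, hn, rfl⟩ := List.mem_iff_getElem.1 ((hmem w).2 hw)
    exact ⟨n, Set.mem_univ _, by simp only [g, ZMod.val_cast_of_lt hn]⟩

theorem mem_wordsOf {A : Type*} [Fintype A] {k : ℕ} {P : (Fin k → A) → Prop} {w : Fin k → A} :
    w ∈ wordsOf P ↔ P w := by
  simp [wordsOf]

section Fibers

variable {A : Type*} [Fintype A] [DecidableEq A] {n : ℕ}

theorem card_filter_init_eq (S : Finset (Fin (n + 1) → A)) (v : Fin n → A) :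
    #{w ∈ S | Fin.init w = v} = #{a | Fin.snoc v a ∈ S} := by
  refine card_nbij' (fun w => w (Fin.last n)) (fun a => Fin.snoc v a) ?_ ?_ ?_ ?_
  · rintro w hw
    obtain ⟨hw, rfl⟩ := mem_filter.1 hw
    simpa [Fin.snoc_init_self] using hw
  · intro a ha
    simpa [Fin.init_snoc] using ha
  · rintro w hw
    obtain ⟨-, rfl⟩ := mem_filter.1 hw
    exact Fin.snoc_init_self w
  · intro a _
    exact Fin.snoc_last (α := fun _ => A) a v

theorem card_filter_tail_eq (S : Finset (Fin (n + 1) → A)) (v : Fin n → A) :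
    #{w ∈ S | Fin.tail w = v} = #{a | Fin.cons a v ∈ S} := by
  refine card_nbij' (fun w => w 0) (Fin.cons · v) ?_ ?_ ?_ ?_
  · rintro w hw
    obtain ⟨hw, rfl⟩ := mem_filter.1 hw
    simpa [Fin.cons_self_tail] using hw
  · intro a ha
    simpa [Fin.tail_cons] using ha
  · rintro w hw
    obtain ⟨-, rfl⟩ := mem_filter.1 hw
    exact Fin.cons_self_tail w
  · intro a _
    exact Fin.cons_zero (α := fun _ => A) a v

end Fibers

section Alternating

variable {A : Type*} {κ : A → Bool}

variable (κ) in
def IsAlternating {k : ℕ} (w : Fin k → A) : Prop :=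
  ∀ i : ℕ, ∀ h : i + 1 < k, κ (w ⟨i + 1, h⟩) ≠ κ (w ⟨i, by omega⟩)

variable (κ) in
noncomputable abbrev alternatingWords [Fintype A] (k : ℕ) : Finset (Fin k → A) :=
  wordsOf (IsAlternating κ)

theorem IsAlternating.eq_xor_bodd {n : ℕ} {w : Fin (n + 1) → A} (hw : IsAlternating κ w)
    (i : ℕ) (hi : i < n + 1) : κ (w ⟨i, hi⟩) = xor (κ (w 0)) i.bodd := by
  induction i with
  | zero => simp
  | succ i ih =>
    rw [Nat.bodd_succ, Bool.xor_not, ← ih (by omega)]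
    exact Bool.eq_not.2 (hw i hi)

theorem isAlternating_cons_iff {n : ℕ} {a : A} {v : Fin (n + 1) → A} :
    IsAlternating κ (Fin.cons a v : Fin (n + 2) → A) ↔ κ (v 0) ≠ κ a ∧ IsAlternating κ v := by
  refine ⟨fun h => ⟨by exact h 0 (by omega), fun i hi => h (i + 1) (by omega)⟩, ?_⟩
  rintro ⟨h0, hv⟩ (_ | i) hi
  · exact h0
  · exact hv i (by omega)

theorem isAlternating_snoc_iff {n : ℕ} {a : A} {v : Fin (n + 1) → A} :
    IsAlternating κ (Fin.snoc v a : Fin (n + 2) → A) ↔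
      IsAlternating κ v ∧ κ a ≠ κ (v (Fin.last n)) := by
  have hsnoc : ∀ i (hi : i < n + 1),
      (Fin.snoc v a : Fin (n + 2) → A) ⟨i, by omega⟩ = v ⟨i, hi⟩ :=
    fun i hi => Fin.snoc_castSucc (α := fun _ => A) a v ⟨i, hi⟩
  have hlast : (Fin.snoc v a : Fin (n + 2) → A) ⟨n + 1, by omega⟩ = a :=
    Fin.snoc_last (α := fun _ => A) a v
  refine ⟨fun h => ⟨fun i hi => ?_, ?_⟩, ?_⟩
  · have := h i (by omega)
    rwa [hsnoc _ hi, hsnoc i (by omega)] at this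
  · have := h n (by omega)
    rwa [hlast, hsnoc n (by omega)] at this
  rintro ⟨hv, hvlast⟩ i hi
  rcases Nat.lt_or_ge (i + 1) (n + 1) with hlt | hge
  · rw [hsnoc _ hlt, hsnoc i (by omega)]
    exact hv i hlt
  · obtain rfl : i = n := by omega
    rw [hlast, hsnoc i (by omega)]
    exact hvlast

theorem card_filter_init_eq_card_filter_tail_alternatingWords [Fintype A] [DecidableEq A]
    {n : ℕ} (h : Even (n + 1) ∨ ∀ b, #{a | κ a = b} = #{a | κ a = !b}) (v : Fin n → A) :
    #{w ∈ alternatingWords κ (n + 1) | Fin.init w = v} =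
      #{w ∈ alternatingWords κ (n + 1) | Fin.tail w = v} := by
  cases n with
  | zero => simp only [Subsingleton.elim _ v]
  | succ m =>
    rw [card_filter_init_eq, card_filter_tail_eq]
    by_cases hv : IsAlternating κ v
    · simp only [mem_wordsOf, isAlternating_snoc_iff, hv, ne_eq, true_and,
        isAlternating_cons_iff, and_true]
      rw [show v (Fin.last m) = v ⟨m, by omega⟩ from rfl, hv.eq_xor_bodd]
      cases hm : m.bodd
      · simp [eq_comm]
      · -- the first and last letters of `v` lie in opposite classes, whose sizes must agree
        have hodd : ¬Even (m + 1 + 1) := by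
          have := Nat.mod_two_of_bodd m
          rw [Nat.even_iff]
          simp only [hm, Bool.toNat_true] at this
          omega
        simpa [Bool.eq_not, eq_comm] using h.resolve_left hodd (κ (v 0))
    · simp [mem_wordsOf, isAlternating_snoc_iff, isAlternating_cons_iff, hv]

def window (u : ℕ → A) (k s : ℕ) : Fin k → A := fun j => u (s + j)

theorem tail_window (u : ℕ → A) (n s : ℕ) :
    Fin.tail (window u (n + 1) s) = Fin.init (window u (n + 1) (s + 1)) := by
  funext j
  simp only [window, Fin.tail, Fin.init, Fin.val_succ, Fin.val_castSucc]
  ring_nf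

theorem isAlternating_window {u : ℕ → A} (hu : ∀ m, κ (u (m + 1)) ≠ κ (u m)) (k s : ℕ) :
    IsAlternating κ (window u k s) :=
  fun i _ => hu (s + i)

theorem exists_alternating_window_eq (hκ : Function.Surjective κ) {n : ℕ}
    {e e' : Fin (n + 1) → A} (he : IsAlternating κ e) (he' : IsAlternating κ e') :
    ∃ (u : ℕ → A) (t : ℕ), (∀ m, κ (u (m + 1)) ≠ κ (u m)) ∧
      window u (n + 1) 0 = e ∧ window u (n + 1) t = e' := by
  set p := κ (e 0)
  -- `e'` is placed at an offset `t` past `e` whose parity lets the alternation of `e` continue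
  -- into `e'`; the gap is filled with letters of the forced class
  obtain ⟨t, htn, ht⟩ : ∃ t, n + 1 ≤ t ∧ t.bodd = xor p (κ (e' 0)) := by
    cases xor p (κ (e' 0))
    exacts [⟨2 * (n + 1), by omega, by simp [Nat.bodd_mul]⟩,
      ⟨2 * (n + 1) + 1, by omega, by simp [Nat.bodd_mul]⟩]
  let u : ℕ → A := fun m =>
    if hm : m < n + 1 then e ⟨m, hm⟩
    else if hm' : t ≤ m ∧ m - t < n + 1 then e' ⟨m - t, hm'.2⟩
    else Function.surjInv hκ (xor p m.bodd)
  have hu : ∀ m, κ (u m) = xor p m.bodd := by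
    intro m
    simp only [u]
    split_ifs with hm hm'
    · exact he.eq_xor_bodd m hm
    · rw [he'.eq_xor_bodd, ← Nat.sub_add_cancel hm'.1, Nat.bodd_add, ht, Nat.add_sub_cancel]
      simp [Bool.xor_left_comm, Bool.xor_comm]
    · exact Function.surjInv_eq hκ _
  refine ⟨u, t, fun m => ?_, ?_, ?_⟩
  · rw [hu, hu, Nat.bodd_succ, Bool.xor_not]
    exact Bool.not_ne_self _
  · funext j
    simp only [window, Nat.zero_add, u, dif_pos j.isLt]
  · funext j
    have h1 : ¬(t + j < n + 1) := by omega
    have h2 : t ≤ t + j ∧ t + j - t < n + 1 := ⟨by omega, by omega⟩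
    simp only [window, u]
    rw [dif_neg h1, dif_pos h2]
    simp

variable [Fintype A]

theorem reflTransGen_consecutive_alternatingWords (hκ : Function.Surjective κ) {n : ℕ}
    (a b : alternatingWords κ (n + 1)) :
    Relation.ReflTransGen
      (Consecutive (fun w : alternatingWords κ (n + 1) => Fin.init w.1) (fun w => Fin.tail w.1))
      a b := by
  obtain ⟨u, t, hu, hu0, hut⟩ :=
    exists_alternating_window_eq hκ (mem_wordsOf.1 a.2) (mem_wordsOf.1 b.2)
  let W : ℕ → alternatingWords κ (n + 1) := fun s =>
    ⟨window u (n + 1) s, mem_wordsOf.2 (isAlternating_window hu _ _)⟩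
  have hW : ∀ s, Relation.ReflTransGen
      (Consecutive (fun w : alternatingWords κ (n + 1) => Fin.init w.1) (fun w => Fin.tail w.1))
      (W 0) (W s) := by
    intro s
    induction s with
    | zero => exact .refl
    | succ s ih => exact ih.tail (tail_window u n s)
  convert hW t
  · exact Subtype.ext hu0.symm
  · exact Subtype.ext hut.symm

theorem hasUCycle_alternatingWords [DecidableEq A] (hκ : Function.Surjective κ) (n : ℕ)
    (h : Even (n + 1) ∨ ∀ b, #{a | κ a = b} = #{a | κ a = !b}) :
    HasUCycle (alternatingWords κ (n + 1)) := by
  set S := alternatingWords κ (n + 1)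
  have : Nonempty S :=
    ⟨⟨window (fun m => Function.surjInv hκ m.bodd) (n + 1) 0, mem_wordsOf.2 <|
      isAlternating_window (fun m => by simp [Function.surjInv_eq hκ, Nat.bodd_succ]) _ _⟩⟩
  obtain ⟨l, hnd, hall, hcyc⟩ :=
    exists_eulerian_circuit (src := fun w : S => Fin.init w.1) (tgt := fun w : S => Fin.tail w.1)
      (fun v => (card_filter_univ_coe S (Fin.init · = v)).trans <|
        (card_filter_init_eq_card_filter_tail_alternatingWords h v).trans
          (card_filter_univ_coe S (Fin.tail · = v)).symm)
      (reflTransGen_consecutive_alternatingWords hκ)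
  refine hasUCycle_of_cycle_chain S (l.map Subtype.val) ?_ (hnd.map Subtype.val_injective)
    (fun w => by simp [hall]) ?_
  · exact fun hl => List.ne_nil_of_mem (hall (Classical.arbitrary S)) (List.map_eq_nil_iff.1 hl)
  · rw [← Cycle.map_coe, Cycle.chain_map]
    exact hcyc

end Alternating

/-- Over an alphabet of `n_v ≥ 1` vowels and `n_c ≥ 1` consonants (encoded as
`Fin n_v ⊕ Fin n_c`), U-cycles of alternating `k`-letter words (consecutive letters
from opposite classes) exist if `k ≥ 1` is even, or if `k` is odd and `n_v = n_c`. -/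
theorem ucycle_alternating_words (nv nc k : ℕ) (hv : 1 ≤ nv) (hc : 1 ≤ nc) (hk : 1 ≤ k)
    (h : Even k ∨ (Odd k ∧ nv = nc)) :
    HasUCycle (wordsOf (fun w : Fin k → (Fin nv ⊕ Fin nc) =>
      ∀ i : ℕ, ∀ h' : i + 1 < k,
        (w ⟨i + 1, h'⟩).isLeft ≠ (w ⟨i, by omega⟩).isLeft)) := by
  obtain ⟨n, rfl⟩ : ∃ n, k = n + 1 := ⟨k - 1, by omega⟩
  have hκ : Function.Surjective (Sum.isLeft : Fin nv ⊕ Fin nc → Bool) := by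
    rintro (_ | _)
    exacts [⟨.inr ⟨0, hc⟩, rfl⟩, ⟨.inl ⟨0, hv⟩, rfl⟩]
  refine hasUCycle_alternatingWords hκ n (h.imp_right fun ⟨_, hnv⟩ b => ?_)
  subst hnv
  exact card_equiv (Equiv.sumComm _ _) (fun a => by cases a <;> simp)
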